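/- Unrolled upper bound on the distance between the two generated images sharing a latent code. Let d, T ∈ ℕ with T ≥ 1. Let μ, μ̂ : (EuclideanSpace ℝ (Fin d)) → ℕ → EuclideanSpace ℝ (Fin d), σ : ℕ → EuclideanSpace ℝ (Fin d), ε : ℕ → EuclideanSpace ℝ (Fin d), and define two chains with a common terminal point x_T = x̂_T and shared noises: x_{t−1} = μ (x_t) t + (σ t) ⊙ (ε t) and x̂_{t−1} = μ̂ (x̂_t) t + (σ t) ⊙ (ε t) for t = T, …, 1. Assume for each t with 1 ≤ t ≤ T: (i) y ↦ μ y t is K_t-Lipschitz with K_t ≥ 0; (ii) ‖μ y t − μ̂ y t‖ ≤ S_t for all y, with S_t ≥ 0. Then the generated images satisfy ‖x₀ − x̂₀‖ ≤ Σ_{t=1}^{T} ( Π_{s=1}^{t−1} (K_s + 1) ) · S_t. -/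

import Mathlib

/-!
The shared noise cancels in `x (t-1) - x̂ (t-1)`, leaving `μ (x t) t - μ̂ (x̂ t) t`; comparing both
means with `μ (x̂ t) t` gives `B (t-1) ≤ K t * B t + S t` for `B t = ‖x t - x̂ t‖`, hence
`B (t-1) ≤ (K t + 1) * B t + S t`. Unrolling this backward recursion from `B T = 0` yields the sum.
-/

open Finset

section BackwardRecursion

variable {a S B : ℕ → ℝ} {T m : ℕ}

def unrolledBound (a S : ℕ → ℝ) (T m : ℕ) : ℝ :=
  ∑ t ∈ Icc (m + 1) T, (∏ s ∈ Icc (m + 1) (t - 1), a s) * S t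

lemma unrolledBound_self : unrolledBound a S T T = 0 := by
  simp [unrolledBound]

lemma unrolledBound_of_lt (h : m < T) :
    unrolledBound a S T m = S (m + 1) + a (m + 1) * unrolledBound a S T (m + 1) := by
  have hprod : ∀ t ∈ Icc (m + 2) T,
      ∏ s ∈ Icc (m + 1) (t - 1), a s = a (m + 1) * ∏ s ∈ Icc (m + 2) (t - 1), a s := by
    intro t ht
    rw [← insert_Icc_add_one_left_eq_Icc (by grind), prod_insert (by simp)]
    rfl
  rw [unrolledBound, unrolledBound, ← insert_Icc_add_one_left_eq_Icc h, sum_insert (by simp),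
    mul_sum, sum_congr rfl fun t ht => by rw [hprod t ht, mul_assoc]]
  simp

lemma le_unrolledBound (ha : ∀ t, 1 ≤ t → t ≤ T → 0 ≤ a t) (hB : B T ≤ 0)
    (hstep : ∀ m < T, B m ≤ a (m + 1) * B (m + 1) + S (m + 1)) (hm : m ≤ T) :
    B m ≤ unrolledBound a S T m := by
  induction hm using Nat.decreasingInduction with
  | self => rwa [unrolledBound_self]
  | of_succ k hk ih =>
    rw [unrolledBound_of_lt hk]
    have := mul_le_mul_of_nonneg_left ih (ha (k + 1) k.succ_pos hk)
    linarith [hstep k hk]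

end BackwardRecursion

lemma norm_sub_le_of_sub_eq_sub {E : Type*} [SeminormedAddCommGroup E] {f g : E → E} {K S : ℝ}
    (hf : ∀ y y', ‖f y - f y'‖ ≤ K * ‖y - y'‖) (hfg : ∀ y, ‖f y - g y‖ ≤ S)
    {y ŷ y' ŷ' : E} (hnoise : y' - f y = ŷ' - g ŷ) : ‖y' - ŷ'‖ ≤ K * ‖y - ŷ‖ + S := by
  have : y' - ŷ' = (f y - f ŷ) + (f ŷ - g ŷ) := by
    rw [sub_eq_iff_eq_add.mp hnoise]; abel
  rw [this]
  exact (norm_add_le _ _).trans (add_le_add (hf y ŷ) (hfg ŷ))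

theorem unrolled_image_distance_bound_general
    (d T : ℕ)
    (μ μhat : EuclideanSpace ℝ (Fin d) → ℕ → EuclideanSpace ℝ (Fin d))
    (σ ε : ℕ → EuclideanSpace ℝ (Fin d))
    (K S : ℕ → ℝ)
    (hK : ∀ t, 1 ≤ t → t ≤ T → 0 ≤ K t)
    (hLip : ∀ t, 1 ≤ t → t ≤ T →
      ∀ y y', ‖μ y t - μ y' t‖ ≤ K t * ‖y - y'‖)
    (hText : ∀ t, 1 ≤ t → t ≤ T → ∀ y, ‖μ y t - μhat y t‖ ≤ S t)
    (x xhat : ℕ → EuclideanSpace ℝ (Fin d))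
    (hTerm : x T = xhat T)
    (hx : ∀ t, 1 ≤ t → t ≤ T →
      ∀ i, x (t - 1) i = μ (x t) t i + σ t i * ε t i)
    (hxhat : ∀ t, 1 ≤ t → t ≤ T →
      ∀ i, xhat (t - 1) i = μhat (xhat t) t i + σ t i * ε t i) :
    ‖x 0 - xhat 0‖ ≤
      ∑ t ∈ Finset.Icc 1 T, (∏ s ∈ Finset.Icc 1 (t - 1), (K s + 1)) * S t := by
  have hnoise : ∀ m < T, x m - μ (x (m + 1)) (m + 1) = xhat m - μhat (xhat (m + 1)) (m + 1) := by
    intro m hm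
    ext i
    have hxi := hx (m + 1) m.succ_pos hm i
    have hxhati := hxhat (m + 1) m.succ_pos hm i
    rw [Nat.add_sub_cancel] at hxi hxhati
    simp only [PiLp.sub_apply, hxi, hxhati]
    ring
  have hstep : ∀ m < T,
      ‖x m - xhat m‖ ≤ (K (m + 1) + 1) * ‖x (m + 1) - xhat (m + 1)‖ + S (m + 1) := by
    intro m hm
    have := norm_sub_le_of_sub_eq_sub (hLip (m + 1) m.succ_pos hm)
      (hText (m + 1) m.succ_pos hm) (hnoise m hm)
    linarith [norm_nonneg (x (m + 1) - xhat (m + 1))]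
  have hK1 : ∀ t, 1 ≤ t → t ≤ T → 0 ≤ K t + 1 := fun t h1 h2 => by linarith [hK t h1 h2]
  simpa [unrolledBound] using
    le_unrolledBound (B := fun m => ‖x m - xhat m‖) hK1 (by simp [hTerm]) hstep T.zero_le

/-- **Unrolled upper bound on the distance between the two generated images sharing a
latent code.** Two chains with common terminal point `x T = x̂ T` and shared noises
`x (t−1) = μ (x t) t + (σ t) ⊙ (ε t)`, `x̂ (t−1) = μ̂ (x̂ t) t + (σ t) ⊙ (ε t)`,
where `y ↦ μ y t` is `K t`-Lipschitz and `‖μ y t − μ̂ y t‖ ≤ S t`, satisfy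
`‖x 0 − x̂ 0‖ ≤ ∑_{t=1}^{T} (∏_{s=1}^{t−1} (K s + 1)) * S t`. -/
theorem unrolled_image_distance_bound
    (d T : ℕ) (hT : 1 ≤ T)
    (μ μhat : EuclideanSpace ℝ (Fin d) → ℕ → EuclideanSpace ℝ (Fin d))
    (σ ε : ℕ → EuclideanSpace ℝ (Fin d))
    (K S : ℕ → ℝ)
    (hK : ∀ t, 1 ≤ t → t ≤ T → 0 ≤ K t)
    (hS : ∀ t, 1 ≤ t → t ≤ T → 0 ≤ S t)
    (hLip : ∀ t, 1 ≤ t → t ≤ T →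
      ∀ y y', ‖μ y t - μ y' t‖ ≤ K t * ‖y - y'‖)
    (hText : ∀ t, 1 ≤ t → t ≤ T → ∀ y, ‖μ y t - μhat y t‖ ≤ S t)
    (x xhat : ℕ → EuclideanSpace ℝ (Fin d))
    (hTerm : x T = xhat T)
    (hx : ∀ t, 1 ≤ t → t ≤ T →
      ∀ i, x (t - 1) i = μ (x t) t i + σ t i * ε t i)
    (hxhat : ∀ t, 1 ≤ t → t ≤ T →
      ∀ i, xhat (t - 1) i = μhat (xhat t) t i + σ t i * ε t i) :
    ‖x 0 - xhat 0‖ ≤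
      ∑ t ∈ Finset.Icc 1 T, (∏ s ∈ Finset.Icc 1 (t - 1), (K s + 1)) * S t :=
  unrolled_image_distance_bound_general d T μ μhat σ ε K S hK hLip hText x xhat hTerm hx hxhat
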